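/- Let u : ℝ² → ℝ be a C^∞ solution of the short pulse equation u_xt = u + (1/2)·u²·u_xx + u·u_x² on ℝ² (i.e., u_xt = u + (1/6)(u³)_xx). Define v = u_t − (1/2)·u²·u_x. Then for all (x,t): v_x = u, and v satisfies the adjoint equation of the short pulse equation, namely v_xt − (1/2)·u²·v_xx − v = 0. -/

import Mathlib

/-- Partial derivative with respect to the first variable `x`. -/
noncomputable def pdx (f : ℝ → ℝ → ℝ) : ℝ → ℝ → ℝ := fun x t => deriv (fun y => f y t) x

/-- Partial derivative with respect to the second variable `t`. -/
noncomputable def pdt (f : ℝ → ℝ → ℝ) : ℝ → ℝ → ℝ := fun x t => deriv (fun s => f x s) t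

open Function

lemma slice_x {f : ℝ → ℝ → ℝ} (hf : ContDiff ℝ (⊤ : ℕ∞) (uncurry f)) (x t : ℝ) :
    HasDerivAt (fun y => f y t) (fderiv ℝ (uncurry f) (x, t) (1, 0)) x := by
  have h1 : HasFDerivAt (uncurry f) (fderiv ℝ (uncurry f) (x, t)) (x, t) :=
    (hf.differentiable (by simp) (x, t)).hasFDerivAt
  have h2 : HasDerivAt (fun y : ℝ => (y, t)) ((1 : ℝ), (0 : ℝ)) x :=
    HasDerivAt.prodMk (hasDerivAt_id x) (hasDerivAt_const x t)
  exact h1.comp_hasDerivAt x h2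

lemma slice_t {f : ℝ → ℝ → ℝ} (hf : ContDiff ℝ (⊤ : ℕ∞) (uncurry f)) (x t : ℝ) :
    HasDerivAt (fun s => f x s) (fderiv ℝ (uncurry f) (x, t) (0, 1)) t := by
  have h1 : HasFDerivAt (uncurry f) (fderiv ℝ (uncurry f) (x, t)) (x, t) :=
    (hf.differentiable (by simp) (x, t)).hasFDerivAt
  have h2 : HasDerivAt (fun s : ℝ => (x, s)) ((0 : ℝ), (1 : ℝ)) t :=
    HasDerivAt.prodMk (hasDerivAt_const t x) (hasDerivAt_id t)
  exact h1.comp_hasDerivAt t h2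

lemma pdx_eq {f : ℝ → ℝ → ℝ} (hf : ContDiff ℝ (⊤ : ℕ∞) (uncurry f)) (x t : ℝ) :
    pdx f x t = fderiv ℝ (uncurry f) (x, t) (1, 0) := (slice_x hf x t).deriv

lemma pdt_eq {f : ℝ → ℝ → ℝ} (hf : ContDiff ℝ (⊤ : ℕ∞) (uncurry f)) (x t : ℝ) :
    pdt f x t = fderiv ℝ (uncurry f) (x, t) (0, 1) := (slice_t hf x t).deriv

lemma hasDerivAt_pdx {f : ℝ → ℝ → ℝ} (hf : ContDiff ℝ (⊤ : ℕ∞) (uncurry f)) (x t : ℝ) :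
    HasDerivAt (fun y => f y t) (pdx f x t) x := by
  rw [pdx_eq hf]; exact slice_x hf x t

lemma contDiff_fderiv_apply {f : ℝ → ℝ → ℝ} (hf : ContDiff ℝ (⊤ : ℕ∞) (uncurry f)) (w : ℝ × ℝ) :
    ContDiff ℝ (⊤ : ℕ∞) (fun p => fderiv ℝ (uncurry f) p w) :=
  (hf.fderiv_right (by simp)).clm_apply contDiff_const

lemma uncurry_pdx {f : ℝ → ℝ → ℝ} (hf : ContDiff ℝ (⊤ : ℕ∞) (uncurry f)) :
    uncurry (pdx f) = fun p : ℝ × ℝ => fderiv ℝ (uncurry f) p (1, 0) := by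
  funext p; exact pdx_eq hf p.1 p.2

lemma uncurry_pdt {f : ℝ → ℝ → ℝ} (hf : ContDiff ℝ (⊤ : ℕ∞) (uncurry f)) :
    uncurry (pdt f) = fun p : ℝ × ℝ => fderiv ℝ (uncurry f) p (0, 1) := by
  funext p; exact pdt_eq hf p.1 p.2

lemma contDiff_pdx {f : ℝ → ℝ → ℝ} (hf : ContDiff ℝ (⊤ : ℕ∞) (uncurry f)) :
    ContDiff ℝ (⊤ : ℕ∞) (uncurry (pdx f)) := by
  rw [uncurry_pdx hf]; exact contDiff_fderiv_apply hf _

lemma contDiff_pdt {f : ℝ → ℝ → ℝ} (hf : ContDiff ℝ (⊤ : ℕ∞) (uncurry f)) :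
    ContDiff ℝ (⊤ : ℕ∞) (uncurry (pdt f)) := by
  rw [uncurry_pdt hf]; exact contDiff_fderiv_apply hf _

lemma fderiv_eval {f : ℝ → ℝ → ℝ} (hf : ContDiff ℝ (⊤ : ℕ∞) (uncurry f)) (w z p : ℝ × ℝ) :
    fderiv ℝ (fun q => fderiv ℝ (uncurry f) q w) p z
      = fderiv ℝ (fderiv ℝ (uncurry f)) p z w := by
  have hdF : ContDiff ℝ (⊤ : ℕ∞) (fderiv ℝ (uncurry f)) := hf.fderiv_right (by simp)
  have hAat : HasFDerivAt (fderiv ℝ (uncurry f)) (fderiv ℝ (fderiv ℝ (uncurry f)) p) p :=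
    (hdF.differentiable (by simp) _).hasFDerivAt
  have h : HasFDerivAt (fun q => fderiv ℝ (uncurry f) q w)
      ((ContinuousLinearMap.apply ℝ ℝ w).comp (fderiv ℝ (fderiv ℝ (uncurry f)) p)) p :=
    (ContinuousLinearMap.apply ℝ ℝ w).hasFDerivAt.comp p hAat
  rw [h.fderiv]; rfl

/-- Clairaut's theorem for smooth functions of two real variables. -/
lemma mixed_comm {f : ℝ → ℝ → ℝ} (hf : ContDiff ℝ (⊤ : ℕ∞) (uncurry f)) (x t : ℝ) :
    pdx (pdt f) x t = pdt (pdx f) x t := by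
  have h1 : pdx (pdt f) x t
      = fderiv ℝ (fderiv ℝ (uncurry f)) (x, t) (1, 0) (0, 1) := by
    rw [pdx_eq (contDiff_pdt hf) x t, uncurry_pdt hf, fderiv_eval hf]
  have h2 : pdt (pdx f) x t
      = fderiv ℝ (fderiv ℝ (uncurry f)) (x, t) (0, 1) (1, 0) := by
    rw [pdt_eq (contDiff_pdx hf) x t, uncurry_pdx hf, fderiv_eval hf]
  rw [h1, h2]
  have hdF : ContDiff ℝ (⊤ : ℕ∞) (fderiv ℝ (uncurry f)) := hf.fderiv_right (by simp)
  exact second_derivative_symmetric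
    (fun y => (hf.differentiable (by simp) y).hasFDerivAt)
    ((hdF.differentiable (by simp) _).hasFDerivAt) _ _

/-- For a solution `u` of the short pulse equation
`u_xt = u + (1/2)u²·u_xx + u·u_x²` (i.e. `u_xt = u + (1/6)(u³)_xx`), the differential
substitution `v = u_t − (1/2)u²·u_x` satisfies `v_x = u` and the adjoint equation
`v_xt − (1/2)u²·v_xx − v = 0`. -/
theorem stmt14 (u : ℝ → ℝ → ℝ)
    (hu : ContDiff ℝ (⊤ : ℕ∞) (Function.uncurry u))
    (hpde : ∀ x t : ℝ,
      pdx (pdt u) x t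
        = u x t + (1/2) * (u x t) ^ 2 * pdx (pdx u) x t + u x t * (pdx u x t) ^ 2)
    (v : ℝ → ℝ → ℝ)
    (hv : ∀ x t : ℝ, v x t = pdt u x t - (1/2) * (u x t) ^ 2 * pdx u x t) :
    ∀ x t : ℝ,
      pdx v x t = u x t ∧
      pdx (pdt v) x t - (1/2) * (u x t) ^ 2 * pdx (pdx v) x t - v x t = 0 := by
  have hvfun : v = fun x t => pdt u x t - (1/2) * (u x t) ^ 2 * pdx u x t := by
    funext x t; exact hv x t
  have hux := contDiff_pdx hu
  have hut := contDiff_pdt hu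
  have huxx := contDiff_pdx hux
  -- v is smooth
  have hvsm : ContDiff ℝ (⊤ : ℕ∞) (uncurry v) := by
    have : uncurry v = fun p : ℝ × ℝ =>
        uncurry (pdt u) p - (1/2) * (uncurry u p) ^ 2 * uncurry (pdx u) p := by
      funext p; exact hv p.1 p.2
    rw [this]
    exact hut.sub ((contDiff_const.mul (hu.pow 2)).mul hux)
  -- part 1: pdx v = u
  have part1 : ∀ x t : ℝ, pdx v x t = u x t := by
    intro x t
    have h1 := hasDerivAt_pdx hut x t
    have h2 := hasDerivAt_pdx hu x t
    have h3 := hasDerivAt_pdx hux x t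
    have hd : HasDerivAt (fun y => v y t)
        (pdx (pdt u) x t -
          ((1/2) * (2 * u x t ^ 1 * pdx u x t) * pdx u x t
            + (1/2) * (u x t) ^ 2 * pdx (pdx u) x t)) x := by
      rw [hvfun]
      exact h1.sub (((h2.pow 2).const_mul (1/2)).mul h3)
    have := hd.deriv
    show deriv (fun y => v y t) x = u x t
    rw [this, hpde x t]; ring
  refine fun x t => ⟨part1 x t, ?_⟩
  -- pdx (pdx v) = pdx u
  have hxx : pdx (pdx v) x t = pdx u x t := by
    show deriv (fun y => pdx v y t) x = pdx u x t
    have : (fun y => pdx v y t) = fun y => u y t := by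
      funext y; exact part1 y t
    rw [this]; rfl
  -- pdx (pdt v) = pdt u
  have hxt : pdx (pdt v) x t = pdt u x t := by
    rw [mixed_comm hvsm x t]
    show deriv (fun s => pdx v x s) t = pdt u x t
    have : (fun s => pdx v x s) = fun s => u x s := by
      funext s; exact part1 x s
    rw [this]; rfl
  rw [hxt, hxx, hv x t]; ring
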